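/- Orthogonality of the anisotropic variation matrices: For every autonomous anisotropic integrand F of class C¹ on Gr(m+n, m) and every π ∈ Gr(m+n, m), the matrix product B_F(π)ᵀ · B_{F*}(π^⊥) equals the zero matrix. -/

import Mathlib

open MeasureTheory Metric Set Filter Matrix
open scoped ENNReal Topology NNReal RealInnerProductSpace

attribute [local instance]
  Matrix.frobeniusSeminormedAddCommGroup
  Matrix.frobeniusNormedAddCommGroup
  Matrix.frobeniusIsBoundedSMul
  Matrix.frobeniusNormedSpace

noncomputable section

namespace Aniso

/-- Euclidean space `ℝ^d`. -/
abbrev E (d : ℕ) : Type := EuclideanSpace ℝ (Fin d)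

/-- Square `d × d` real matrices. -/
abbrev Mat (d : ℕ) : Type := Matrix (Fin d) (Fin d) ℝ

noncomputable local instance matMeasurableSpace {k l : ℕ} :
    MeasurableSpace (Matrix (Fin k) (Fin l) ℝ) := borel _

local instance matBorelSpace {k l : ℕ} : BorelSpace (Matrix (Fin k) (Fin l) ℝ) := ⟨rfl⟩

/-- Matrix inner product `A : B = tr (Aᵀ B)`. -/
def mInner {d : ℕ} (A B : Mat d) : ℝ := (Aᵀ * B).trace

/-- The Grassmannian `Gr(d, m)`, viewed as the set of symmetric projection matrices of
trace `m`. -/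
def Grass (d m : ℕ) : Set (Mat d) := {π : Mat d | π.IsSymm ∧ π * π = π ∧ π.trace = (m : ℝ)}

/-- Matrix acting on a vector of Euclidean space. -/
def mvec {d : ℕ} (A : Mat d) (v : E d) : E d := Matrix.toEuclideanLin A v

/-- Matrix (w.r.t. the standard basis) of a continuous linear map of Euclidean space. -/
def matOfCLM {d : ℕ} (A : E d →L[ℝ] E d) : Mat d :=
  Matrix.of fun i j => A (EuclideanSpace.single j 1) i

/-- The sandwich `π^⊥ ∘ L ∘ π + (π^⊥ ∘ L ∘ π)ᵀ`. -/
def sandwich {d : ℕ} (π L : Mat d) : Mat d := (1 - π) * L * π + ((1 - π) * L * π)ᵀ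

/-- The matrix `B_F(x, π)`, defined through
`B_F(x, π) : L = F(x, π) (π : L) + ⟨D_π F(x, π), π^⊥∘L∘π + (π^⊥∘L∘π)ᵀ⟩`. -/
def BF {d : ℕ} (F : E d × Mat d → ℝ) (x : E d) (π : Mat d) : Mat d :=
  Matrix.of fun i j =>
    F (x, π) * (πᵀ * Matrix.single i j 1).trace
      + fderiv ℝ (fun Q : Mat d => F (x, Q)) π (sandwich π (Matrix.single i j 1))

/-- The dual integrand `F*(x, σ) := F(x, σ^⊥)`. -/
def dualIntegrand {d : ℕ} (F : E d × Mat d → ℝ) : E d × Mat d → ℝ := fun p => F (p.1, 1 - p.2)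

/-- The matrix `B_{F*}(x, σ)` of the dual integrand. -/
def BFdual {d : ℕ} (F : E d × Mat d → ℝ) (x : E d) (σ : Mat d) : Mat d :=
  BF (dualIntegrand F) x σ

/-- Autonomous versions. -/
def BFa {d : ℕ} (F : Mat d → ℝ) (π : Mat d) : Mat d := BF (fun q => F q.2) 0 π

def BFdualA {d : ℕ} (F : Mat d → ℝ) (σ : Mat d) : Mat d := BFdual (fun q => F q.2) 0 σ

/-- The uniformly scalar atomic condition, with a uniform constant `K`. -/
def USACWith {d : ℕ} (m : ℕ) (F : E d × Mat d → ℝ) (U : Set (E d)) (K : ℝ) : Prop :=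
  0 < K ∧ ∀ x ∈ U, ∀ π₀ ∈ Grass d m, ∀ π₁ ∈ Grass d m,
    K * ‖π₀ - π₁‖ ^ 2 ≤ mInner (BF F x π₀) (BFdual F x (1 - π₁))

/-- Bound `CF` for the `C²` norm of the integrand on `U × Gr(d, m)`. -/
def C2BoundOn {d : ℕ} (m : ℕ) (F : E d × Mat d → ℝ) (U : Set (E d)) (CF : ℝ) : Prop :=
  ∀ x ∈ U, ∀ π ∈ Grass d m,
    |F (x, π)| ≤ CF ∧ @Norm.norm _ ContinuousLinearMap.hasOpNorm (fderiv ℝ F (x, π)) ≤ CF ∧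
      @Norm.norm _ (@ContinuousLinearMap.hasOpNorm ℝ ℝ (E d × Mat d) (E d × Mat d →L[ℝ] ℝ) _
        ContinuousLinearMap.toSeminormedAddCommGroup _ _ _ ContinuousLinearMap.toNormedSpace _)
        (fderiv ℝ (fderiv ℝ F) (x, π)) ≤ CF

/-- Orthogonal projection onto a subspace, as an endomorphism of the ambient space. -/
def projCLM {d : ℕ} (S : Submodule ℝ (E d)) : E d →L[ℝ] E d :=
  S.subtypeL.comp S.orthogonalProjectionOnto

/-- Volume of the unit ball of `ℝ^m`, i.e. `ω_m`. -/
def uballVol (m : ℕ) : ℝ := (volume (ball (0 : E m) 1)).toReal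

/-- The boundary assumption: `Γ` is a closed `k`-dimensional embedded `C^{1,α}` submanifold
(with tangent spaces `T x` at `x ∈ Γ`), containing the center `x₀`, which over the ball
`B(x₀, r₀)` is a `C^{1,α}` graph over the tangent space at the center, and whose normal
projections satisfy the quantitative `κ`-Hölder estimates, with `c κ r₀^α < 1/2`. -/
structure BoundaryAssumption (d k : ℕ) (x₀ : E d) (Γ : Set (E d))
    (T : E d → Submodule ℝ (E d)) (α κ r₀ c : ℝ) : Prop where
  isClosed : IsClosed Γ
  center_mem : x₀ ∈ Γ
  alpha_pos : 0 < α
  alpha_le_one : α ≤ 1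
  kappa_nonneg : 0 ≤ κ
  r0_pos : 0 < r₀
  c_ge_two : 2 ≤ c
  smallness : c * κ * r₀ ^ α < 1 / 2
  dim_eq : ∀ x ∈ Γ, Module.finrank ℝ (T x) = k
  normal_est : ∀ x ∈ Γ ∩ ball x₀ r₀, ∀ y ∈ Γ ∩ ball x₀ r₀,
    ‖projCLM (T x)ᗮ (x - y)‖ ≤ κ * ‖x - y‖ ^ (1 + α)
  proj_est : ∀ x ∈ Γ ∩ ball x₀ r₀, ∀ y ∈ Γ ∩ ball x₀ r₀,
    ‖matOfCLM (projCLM (T x)ᗮ) - matOfCLM (projCLM (T y)ᗮ)‖ ≤ κ * ‖x - y‖ ^ α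
  graph_over_tangent : ∃ f : E d → E d, ContDiff ℝ 1 f ∧ (∀ z, f z ∈ (T x₀)ᗮ) ∧
    (∃ Cf : ℝ, ∀ z₁ z₂ : E d, ‖fderiv ℝ f z₁ - fderiv ℝ f z₂‖ ≤ Cf * ‖z₁ - z₂‖ ^ α) ∧
    Γ ∩ ball x₀ r₀ =
      {x ∈ ball x₀ r₀ | projCLM (T x₀)ᗮ (x - x₀) = f (projCLM (T x₀) (x - x₀))}

/-- Test vector fields: `C¹`, compactly supported in `B(x₀, r₀)`, vanishing on `Γ`. -/
def TestOn {d : ℕ} (x₀ : E d) (r₀ : ℝ) (Γ : Set (E d)) (g : E d → E d) : Prop :=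
  ContDiff ℝ 1 g ∧ HasCompactSupport g ∧ tsupport g ⊆ ball x₀ r₀ ∧ ∀ y ∈ Γ, g y = 0

section Graph

variable {m n : ℕ}

/-- The graph map `x ↦ (x, u x) ∈ ℝ^{m+n}`. -/
def graphMap (u : E m → E n) (x : E m) : E (m + n) :=
  (EuclideanSpace.equiv (Fin (m + n)) ℝ).symm (Fin.append (fun i => x i) (fun j => u x j))

/-- The derivative matrix `Du(x) ∈ ℝ^{n×m}` of `u` at `x`. -/
def Dmat (u : E m → E n) (x : E m) : Matrix (Fin n) (Fin m) ℝ :=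
  Matrix.of fun i j => fderiv ℝ u x (EuclideanSpace.single j 1) i

/-- `M(L) = (id_m ; L)`. -/
def MofL (L : Matrix (Fin n) (Fin m) ℝ) : Matrix (Fin (m + n)) (Fin m) ℝ :=
  Matrix.of fun i j =>
    Fin.addCases (fun i₁ => (1 : Matrix (Fin m) (Fin m) ℝ) i₁ j) (fun i₂ => L i₂ j) i

/-- `h(L) = M(L) (M(L)ᵀ M(L))⁻¹ M(L)ᵀ ∈ Gr(m+n, m)`. -/
def hMat (L : Matrix (Fin n) (Fin m) ℝ) : Mat (m + n) :=
  MofL L * ((MofL L)ᵀ * MofL L)⁻¹ * (MofL L)ᵀ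

/-- The area factor `A(L) = √(det (M(L)ᵀ M(L)))`. -/
def areaF (L : Matrix (Fin n) (Fin m) ℝ) : ℝ := Real.sqrt ((MofL L)ᵀ * MofL L).det

/-- `T₀Γ ⊆ im h(L)`: the tangent plane of the boundary is contained in the plane `h(L)`. -/
def planeContains (S : Submodule ℝ (E (m + n))) (L : Matrix (Fin n) (Fin m) ℝ) : Prop :=
  S ≤ LinearMap.range (Matrix.toEuclideanLin (hMat L))

/-- The anisotropic first variation of the varifold `V[u]` induced by the graph of `u`. -/
def graphFV (F : E (m + n) × Mat (m + n) → ℝ) (Ω : Set (E m)) (u : E m → E n)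
    (g : E (m + n) → E (m + n)) : ℝ :=
  ∫ x in Ω,
    (fderiv ℝ (fun y => F (y, hMat (Dmat u x))) (graphMap u x) (g (graphMap u x))
      + mInner (BF F (graphMap u x) (hMat (Dmat u x))) (matOfCLM (fderiv ℝ g (graphMap u x))))
      * areaF (Dmat u x)

/-- `V[u]` has `F`-mean curvature `H` relative to `Γ`. -/
def HasGraphMeanCurv (F : E (m + n) × Mat (m + n) → ℝ) (x₀ : E (m + n)) (r₀ : ℝ)
    (Γ : Set (E (m + n))) (Ω : Set (E m)) (u : E m → E n) (H : E m → E (m + n)) : Prop :=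
  ∀ g : E (m + n) → E (m + n), TestOn x₀ r₀ Γ g →
    graphFV F Ω u g = - ∫ x in Ω, ⟪H x, g (graphMap u x)⟫ * areaF (Dmat u x)

/-- The projection `ℝ^{m+n} → ℝ^m` onto the first `m` coordinates. -/
def projFst (m n : ℕ) (y : E (m + n)) : E m :=
  (EuclideanSpace.equiv (Fin m) ℝ).symm fun i => y (Fin.castAdd n i)

/-- The excess `E(x, r, L)` of the Lipschitz graph of `u`. -/
def excess (Ω : Set (E m)) (u : E m → E n) (x : E m) (r : ℝ)
    (L : Matrix (Fin n) (Fin m) ℝ) : ℝ :=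
  ⨍ z in ball x r ∩ Ω, ‖Dmat u z - L‖ ^ 2

/-- `L^p` norm of the mean curvature over `Ω`. -/
def HLpNorm (Ω : Set (E m)) (H : E m → E (m + n)) (p : ℝ) : ℝ :=
  (eLpNorm H (ENNReal.ofReal p) (volume.restrict Ω)).toReal

/-- Mass ratio bound: `ℋ^m(graph(u) ∩ B(x₀, r)) ≤ (1/2 + σ) ω_m r^m` for `r ∈ (0, r₀)`. -/
def MassBound (u : E m → E n) (Ω : Set (E m)) (x₀ : E (m + n)) (r₀ σ : ℝ) : Prop :=
  ∀ r ∈ Ioo (0 : ℝ) r₀,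
    μH[(m : ℝ)] (graphMap u '' Ω ∩ ball x₀ r) ≤
      ENNReal.ofReal ((1 / 2 + σ) * uballVol m * r ^ m)

/-- The anisotropic area integrand `I_F(L) := A(L) F(h(L))` of an autonomous integrand. -/
def IF (F : Mat (m + n) → ℝ) (L : Matrix (Fin n) (Fin m) ℝ) : ℝ := areaF L * F (hMat L)

/-- Standing graph assumptions (centered at the origin): boundary assumption for
`Γ = ∂graph(u) ∩ B(0, r₀)`, `Ω ⊆ B^m(0, r₀)` open with `∂Ω ∩ B^m(0, r₀) = p(Γ)`,
`u` Lipschitz with constant `Ku`, `F`-mean curvature `H ∈ L^p`, `p > m`, and mass-ratio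
bound with constant `σ ∈ (0, 1)`. -/
structure GraphSetup (m n : ℕ) (F : E (m + n) × Mat (m + n) → ℝ) (Ω : Set (E m))
    (u : E m → E n) (Ku : ℝ≥0) (Γ : Set (E (m + n)))
    (T : E (m + n) → Submodule ℝ (E (m + n))) (α κ r₀ c p σ : ℝ)
    (H : E m → E (m + n)) : Prop where
  bdry : BoundaryAssumption (m + n) (m - 1) 0 Γ T α κ r₀ c
  F_pos : ∀ y : E (m + n), ∀ π ∈ Grass (m + n) m, 0 < F (y, π)
  F_C1 : ContDiff ℝ 1 F
  Ω_open : IsOpen Ω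
  Ω_sub : Ω ⊆ ball 0 r₀
  u_lip : LipschitzOnWith Ku u Ω
  Γ_eq : Γ = (closure (graphMap u '' Ω) \ graphMap u '' Ω) ∩ ball 0 r₀
  frontier_eq : frontier Ω ∩ ball (0 : E m) r₀ = (projFst m n '' Γ) ∩ ball (0 : E m) r₀
  p_gt : (m : ℝ) < p
  H_Lp : MemLp H (ENNReal.ofReal p) (volume.restrict Ω)
  meanCurv : HasGraphMeanCurv F 0 r₀ Γ Ω u H
  sigma_mem : σ ∈ Ioo (0 : ℝ) 1
  mass : MassBound u Ω 0 r₀ σ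

end Graph


/-- Anisotropic first variation of a general varifold (a measure on `B × Gr`). -/
def varFV {d : ℕ} (F : E d × Mat d → ℝ) (V : Measure (E d × Mat d)) (g : E d → E d) : ℝ :=
  ∫ q, (fderiv ℝ (fun y => F (y, q.2)) q.1 (g q.1)
    + mInner (BF F q.1 q.2) (matOfCLM (fderiv ℝ g q.1))) ∂V

/-- Anisotropic first variation of a rectifiable varifold `v(M, Θ, τ)`. -/
def vFV {d : ℕ} (m : ℕ) (F : E d × Mat d → ℝ) (M : Set (E d)) (Θ : E d → ℝ)
    (τ : E d → Mat d) (g : E d → E d) : ℝ :=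
  ∫ y in M, (fderiv ℝ (fun z => F (z, τ y)) y (g y)
    + mInner (BF F y (τ y)) (matOfCLM (fderiv ℝ g y))) * Θ y ∂μH[(m : ℝ)]

/-- The tilt excess `E_V(π, x, r)` of `v(M, Θ, τ)`. -/
def tiltExcess {d : ℕ} (m : ℕ) (M : Set (E d)) (Θ : E d → ℝ) (τ : E d → Mat d)
    (π : Mat d) (x : E d) (r : ℝ) : ℝ :=
  (1 / r ^ m) * ∫ y in ball x r ∩ M, ‖π - τ y‖ ^ 2 * Θ y ∂μH[(m : ℝ)]

/-- The height excess `H_V(z, π, x, r)` of `v(M, Θ, τ)`. -/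
def heightExcess {d : ℕ} (m : ℕ) (M : Set (E d)) (Θ : E d → ℝ)
    (z : E d) (π : Mat d) (x : E d) (r : ℝ) : ℝ :=
  (1 / r ^ m) * ∫ y in ball x r ∩ M, ‖mvec (1 - π) (y - z)‖ ^ 2 * Θ y ∂μH[(m : ℝ)]

/-- Frobenius inner product of rectangular matrices. -/
def mInnerR {m n : ℕ} (A B : Matrix (Fin n) (Fin m) ℝ) : ℝ := (Aᵀ * B).trace

/-- The last coordinate `x_m` of a point of `ℝ^m`. -/
def lastCoord {m : ℕ} (hm : 0 < m) (z : E m) : ℝ := z ⟨m - 1, Nat.sub_lt hm Nat.one_pos⟩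

/-- Auxiliary excess `e(s, L) = E(s, L) + 8 s^γ ε^{-m} ‖H‖_{L^p(Ω)}`. -/
def auxExcess {m n : ℕ} (Ω : Set (E m)) (u : E m → E n) (H : E m → E (m + n))
    (p γ ε s : ℝ) (L : Matrix (Fin n) (Fin m) ℝ) : ℝ :=
  excess Ω u 0 s L + 8 * s ^ γ * (ε ^ m)⁻¹ * HLpNorm Ω H p

/-! With `S` the symmetrised gradient of `F` at `π`, unwinding the definitions gives
`B_F(π) = F(π) π + π^⊥ S π` and, since `D(F*)(π^⊥) = -DF(π)`, `B_{F*}(π^⊥) = F(π) π^⊥ - π S π^⊥`.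
Transposing the first, the product `(F(π) π + π S π^⊥)(F(π) π^⊥ - π S π^⊥)` vanishes because
`π π^⊥ = π^⊥ π = 0`. -/

section Gradient

variable {ι κ R : Type*} [Fintype ι] [Fintype κ] [DecidableEq ι] [DecidableEq κ] [CommRing R]

def gradMat (D : Matrix ι κ R →ₗ[R] R) : Matrix ι κ R := Matrix.of fun i j => D (single i j 1)

theorem trace_transpose_gradMat_mul (D : Matrix ι κ R →ₗ[R] R) (M : Matrix ι κ R) :
    ((gradMat D)ᵀ * M).trace = D M := by
  have hsingle (i : ι) (j : κ) : single i j (M i j) = M i j • single i j 1 := by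
    rw [smul_single, smul_eq_mul, mul_one]
  conv_rhs => rw [matrix_eq_sum_single M]
  simp only [map_sum, hsingle, map_smul, smul_eq_mul]
  rw [Finset.sum_comm]
  simp [trace, mul_apply, gradMat, mul_comm]

end Gradient

section SymGrad

variable {d : ℕ}

def symGrad (D : Mat d →ₗ[ℝ] ℝ) : Mat d := gradMat D + (gradMat D)ᵀ

theorem isSymm_symGrad (D : Mat d →ₗ[ℝ] ℝ) : (symGrad D).IsSymm :=
  isSymm_add_transpose_self _

theorem symGrad_neg (D : Mat d →ₗ[ℝ] ℝ) : symGrad (-D) = -symGrad D := by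
  ext i j
  simp [symGrad, gradMat]
  ring

theorem apply_sandwich (D : Mat d →ₗ[ℝ] ℝ) {π : Mat d} (hπ : π.IsSymm) (L : Mat d) :
    D (sandwich π L) = (((1 - π) * symGrad D * π)ᵀ * L).trace := by
  have hπ' : (1 - π).IsSymm := isSymm_one.sub hπ
  rw [← trace_transpose_gradMat_mul D]
  simp only [sandwich, symGrad, transpose_mul, transpose_add, transpose_transpose, hπ.eq, hπ'.eq,
    Matrix.mul_add, Matrix.add_mul, trace_add, Matrix.mul_assoc]
  congr 1
  · rw [trace_mul_comm π]
    simp only [Matrix.mul_assoc]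
  · rw [← trace_transpose, trace_mul_comm π, Matrix.mul_assoc, trace_mul_comm (gradMat D)]
    simp only [transpose_mul, transpose_transpose, hπ.eq, hπ'.eq, Matrix.mul_assoc]

theorem BF_eq (F : E d × Mat d → ℝ) (x : E d) {π : Mat d} (hπ : π.IsSymm) :
    BF F x π =
      F (x, π) • π + (1 - π) * symGrad (fderiv ℝ (fun Q => F (x, Q)) π).toLinearMap * π := by
  ext i j
  rw [BF, of_apply, ← ContinuousLinearMap.coe_coe, apply_sandwich _ hπ, trace_mul_single,
    trace_mul_single]
  simp

theorem BFa_eq (F : Mat d → ℝ) {π : Mat d} (hπ : π.IsSymm) :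
    BFa F π = F π • π + (1 - π) * symGrad (fderiv ℝ F π).toLinearMap * π :=
  BF_eq _ _ hπ

theorem _root_.fderiv_comp_const_sub {𝕜 E F : Type*} [NontriviallyNormedField 𝕜]
    [NormedAddCommGroup E] [NormedSpace 𝕜 E] [NormedAddCommGroup F] [NormedSpace 𝕜 F]
    {f : E → F} {a x : E} (hf : DifferentiableAt 𝕜 f (a - x)) :
    fderiv 𝕜 (fun y => f (a - y)) x = -fderiv 𝕜 f (a - x) := by
  refine (hf.hasFDerivAt.comp x ((hasFDerivAt_id x).const_sub a)).fderiv.trans ?_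
  ext
  simp

theorem BFdualA_one_sub (F : Mat d → ℝ) {π : Mat d} (hF : DifferentiableAt ℝ F π)
    (hπ : π.IsSymm) :
    BFdualA F (1 - π) = F π • (1 - π) - π * symGrad (fderiv ℝ F π).toLinearMap * (1 - π) := by
  have hD : fderiv ℝ (fun Q => F (1 - Q)) (1 - π) = -fderiv ℝ F π := by
    have h := fderiv_comp_const_sub (f := F) (a := 1) (x := 1 - π) (by rwa [sub_sub_cancel])
    rwa [sub_sub_cancel] at h
  rw [BFdualA, BFdual, BF_eq _ _ (isSymm_one.sub hπ)]
  simp only [dualIntegrand, sub_sub_cancel]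
  rw [hD, ContinuousLinearMap.toLinearMap_neg, symGrad_neg, Matrix.mul_neg, Matrix.neg_mul,
    ← sub_eq_add_neg]

end SymGrad

theorem _root_.IsIdempotentElem.smul_add_mul_mul_smul_sub_eq_zero {R A : Type*} [CommRing R]
    [Ring A] [Algebra R A] {p : A} (hp : IsIdempotentElem p) (c : R) (s : A) :
    (c • p + p * s * (1 - p)) * (c • (1 - p) - p * s * (1 - p)) = 0 := by
  have h₁ : p * (p * s * (1 - p)) = p * s * (1 - p) := by rw [← mul_assoc, ← mul_assoc, hp.eq]
  have h₂ : p * s * (1 - p) * (1 - p) = p * s * (1 - p) := by rw [mul_assoc, hp.one_sub.eq]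
  have h₃ : p * s * (1 - p) * (p * s * (1 - p)) = 0 := by
    simp only [mul_assoc, ← mul_assoc (1 - p), hp.one_sub_mul_self, zero_mul, mul_zero]
  generalize p * s * (1 - p) = x at h₁ h₂ h₃ ⊢
  rw [add_mul, mul_sub, mul_sub, smul_mul_smul_comm, hp.mul_one_sub_self, smul_mul_assoc, h₁,
    mul_smul_comm, h₂, h₃]
  simp

theorem BF_transpose_mul_BFdual_eq_zero_general (m n : ℕ)
    (F : Mat (m + n) → ℝ) (hF : ContDiff ℝ 1 F)
    (π : Mat (m + n)) (hπ : π ∈ Grass (m + n) m) :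
    (BFa F π)ᵀ * BFdualA F (1 - π) = 0 := by
  obtain ⟨hsymm, hidem, -⟩ := hπ
  rw [BFa_eq F hsymm, BFdualA_one_sub F (hF.differentiable one_ne_zero π) hsymm, transpose_add,
    transpose_smul, transpose_mul, transpose_mul, hsymm.eq, (isSymm_one.sub hsymm).eq,
    (isSymm_symGrad _).eq, ← Matrix.mul_assoc]
  exact IsIdempotentElem.smul_add_mul_mul_smul_sub_eq_zero hidem _ _

/-- **Orthogonality of the anisotropic variation matrices.**
For every autonomous anisotropic integrand `F` of class `C¹` on `Gr(m+n, m)` and every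
`π ∈ Gr(m+n, m)`, the matrix product `B_F(π)ᵀ · B_{F*}(π^⊥)` equals the zero matrix. -/
theorem BF_transpose_mul_BFdual_eq_zero (m n : ℕ) (hm : 1 ≤ m) (hn : 1 ≤ n)
    (F : Mat (m + n) → ℝ) (hF : ContDiff ℝ 1 F)
    (hFpos : ∀ π ∈ Grass (m + n) m, 0 < F π)
    (π : Mat (m + n)) (hπ : π ∈ Grass (m + n) m) :
    (BFa F π)ᵀ * BFdualA F (1 - π) = 0 :=
  BF_transpose_mul_BFdual_eq_zero_general m n F hF π hπ

end Aniso
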